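/- In the quantum exterior algebra Λ, the unital subalgebra Λ_e generated by {e_γ : γ ∈ Δ⁺} is 8-dimensional, with ℂ-basis the monomials e_{γ₁}⋯e_{γ_a} for strictly increasing sequences γ₁ < ⋯ < γ_a in Δ⁺ (including the empty product); likewise the unital subalgebra Λ_f generated by {f_γ : γ ∈ Δ⁺} is 8-dimensional with basis the analogous f-monomials. (This is the statement that the anti-holomorphic and holomorphic subcomplexes Ω^{(0,•)}_q(F₃) and Ω^{(•,0)}_q(F₃) have classical dimension.) -/

import Mathlib

noncomputable section

namespace QFlagExt

/-- The positive roots of `sl₃`: `a1 = α₁`, `a2 = α₂`, `a12 = α₁+α₂`. -/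
inductive PosRoot : Type
  | a1 | a2 | a12
deriving DecidableEq

instance instFintypePosRoot : Fintype PosRoot :=
  ⟨{PosRoot.a1, PosRoot.a2, PosRoot.a12}, fun x => by cases x <;> simp⟩

open PosRoot

/-- Position in the convex order `α₂ < α₁+α₂ < α₁`. -/
def pos : PosRoot → ℕ
  | a2 => 0
  | a12 => 1
  | a1 => 2

/-- The symmetric bilinear form `(·,·)` on the roots of `sl₃`. -/
def ip : PosRoot → PosRoot → ℤ
  | a1, a1 => 2
  | a2, a2 => 2
  | a12, a12 => 2
  | a1, a2 => -1
  | a2, a1 => -1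
  | a1, a12 => 1
  | a12, a1 => 1
  | a2, a12 => 1
  | a12, a2 => 1

/-- Generators of the quantum exterior algebra: `e γ` and `f γ` for `γ ∈ Δ⁺`. -/
inductive LGen : Type
  | e : PosRoot → LGen
  | f : PosRoot → LGen
deriving DecidableEq, Fintype

open LGen

/-- The generators viewed inside the free algebra. -/
def ce (x : LGen) : FreeAlgebra ℂ LGen := FreeAlgebra.ι ℂ x

/-- The defining relations of the quantum exterior algebra `Λ` of the full quantum
flag manifold of `O_q(SU₃)`. -/
inductive lrel (q : ℝ) : FreeAlgebra ℂ LGen → FreeAlgebra ℂ LGen → Prop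
  | ee (β γ : PosRoot) (h : pos β ≤ pos γ) :
      lrel q (ce (e γ) * ce (e β)) ((-((q : ℂ) ^ ip β γ)) • (ce (e β) * ce (e γ)))
  | ff (β γ : PosRoot) (h : pos β ≤ pos γ) :
      lrel q (ce (f γ) * ce (f β)) ((-((q : ℂ) ^ (-ip β γ))) • (ce (f β) * ce (f γ)))
  | ef (β γ : PosRoot) (h : β ≠ γ ∨ (β = a12 ∧ γ = a12)) :
      lrel q (ce (e γ) * ce (f β)) ((-((q : ℂ) ^ ip β γ)) • (ce (f β) * ce (e γ)))
  | ef1 :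
      lrel q (ce (e a1) * ce (f a1))
        ((-((q : ℂ) ^ (2 : ℤ))) • (ce (f a1) * ce (e a1))
          - ((q : ℂ) - (q : ℂ)⁻¹) • (ce (f a12) * ce (e a12)))
  | ef2 :
      lrel q (ce (e a2) * ce (f a2))
        ((-((q : ℂ) ^ (2 : ℤ))) • (ce (f a2) * ce (e a2))
          + ((q : ℂ) - (q : ℂ)⁻¹) • (ce (f a12) * ce (e a12)))

/-- The quantum exterior algebra `Λ`. -/
abbrev Lam (q : ℝ) := RingQuot (lrel q)

/-- The generators of `Λ`. -/
def gen (q : ℝ) (x : LGen) : Lam q := RingQuot.mkAlgHom ℂ (lrel q) (ce x)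

/-- The positive roots listed in the convex order. -/
def rootList : List PosRoot := [a2, a12, a1]

/-- The ordered monomial `e_{γ₁}⋯e_{γ_a}` over the roots in `s`, in increasing convex order. -/
def emon (q : ℝ) (s : Finset PosRoot) : Lam q :=
  ((rootList.filter fun γ => decide (γ ∈ s)).map fun γ => gen q (e γ)).prod

/-- The ordered monomial `f_{δ₁}⋯f_{δ_b}` over the roots in `s`, in increasing convex order. -/
def fmon (q : ℝ) (s : Finset PosRoot) : Lam q :=
  ((rootList.filter fun γ => decide (γ ∈ s)).map fun γ => gen q (f γ)).prod

/-- The PBW monomial `f_{δ₁}⋯f_{δ_b} e_{γ₁}⋯e_{γ_a}`. -/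
def mon (q : ℝ) (p : Finset PosRoot × Finset PosRoot) : Lam q :=
  fmon q p.1 * emon q p.2

end QFlagExt

namespace QFlagExt

open PosRoot LGen

/-- The unital subalgebra `Λ_e` generated by the `e_γ`. -/
def LamE (q : ℝ) : Subalgebra ℂ (Lam q) :=
  Algebra.adjoin ℂ (Set.range fun γ : PosRoot => gen q (e γ))

/-- The unital subalgebra `Λ_f` generated by the `f_γ`. -/
def LamF (q : ℝ) : Subalgebra ℂ (Lam q) :=
  Algebra.adjoin ℂ (Set.range fun γ : PosRoot => gen q (f γ))


/-! The relations `e_γ e_β = -q^{(β,γ)} e_β e_γ` (`β ≤ γ`) alone let one move any generator into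
its place in an ordered monomial, and with `1 + q² ≠ 0` they force `e_γ² = 0`; so the ordered
monomials span `Λ_e`. For independence, `Λ` acts on `ℂ^{Finset Δ⁺}` with `e_γ` acting as left
`q`-wedging by `γ` and every `f_δ` acting by `0` (all mixed relations then hold trivially); this
sends the ordered monomial over `s` applied to the vector at `∅` to the vector at `s`.
The same argument, with `q⁻¹` in place of `q`, applies to `Λ_f`. -/

def IsQCommuting {A : Type*} [Ring A] [Algebra ℂ A] (r : ℂ) (g : PosRoot → A) : Prop :=
  ∀ β γ, pos β ≤ pos γ → g γ * g β = -(r ^ ip β γ) • (g β * g γ)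

def orderedMonomial {A : Type*} [Monoid A] (g : PosRoot → A) (s : Finset PosRoot) : A :=
  ((rootList.filter fun γ => decide (γ ∈ s)).map g).prod

lemma map_orderedMonomial {A B F : Type*} [Monoid A] [Monoid B] [FunLike F A B]
    [MonoidHomClass F A B] (φ : F) (g : PosRoot → A) (s : Finset PosRoot) :
    φ (orderedMonomial g s) = orderedMonomial (φ ∘ g) s := by
  rw [orderedMonomial, map_list_prod, List.map_map, orderedMonomial]

lemma pos_injective : Function.Injective pos := by decide

section Span

variable {A : Type*} [Ring A] [Algebra ℂ A] {r : ℂ} {g : PosRoot → A}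

lemma IsQCommuting.mul_self_eq_zero (hg : IsQCommuting r g) (hr : 1 + r ^ 2 ≠ 0)
    (γ : PosRoot) : g γ * g γ = 0 := by
  have h := hg γ γ le_rfl
  rw [show ip γ γ = (2 : ℕ) by cases γ <;> rfl, zpow_natCast] at h
  have h2 : (1 + r ^ 2) • (g γ * g γ) = 0 := by
    rw [add_smul, one_smul]
    nth_rewrite 1 [h]
    simp
  exact (smul_eq_zero.1 h2).resolve_left hr

lemma IsQCommuting.mul_mul_self_eq_zero (hg : IsQCommuting r g) (hr : 1 + r ^ 2 ≠ 0)
    (γ : PosRoot) (x : A) : g γ * (g γ * x) = 0 := by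
  rw [← mul_assoc, hg.mul_self_eq_zero hr, zero_mul]

lemma IsQCommuting.mul_mul_of_lt (hg : IsQCommuting r g) {β γ : PosRoot} (h : pos β < pos γ)
    (x : A) : g γ * (g β * x) = -(r ^ ip β γ) • (g β * (g γ * x)) := by
  rw [← mul_assoc, hg β γ h.le, smul_mul_assoc, mul_assoc]

lemma IsQCommuting.exists_mul_orderedMonomial (hg : IsQCommuting r g) (hr : 1 + r ^ 2 ≠ 0)
    (γ : PosRoot) (s : Finset PosRoot) :
    ∃ c : ℂ, g γ * orderedMonomial g s = c • orderedMonomial g (insert γ s) := by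
  have h12_2 := hg.mul_mul_of_lt (β := a2) (γ := a12) (by decide)
  have h1_2 := hg.mul_mul_of_lt (β := a2) (γ := a1) (by decide)
  have h1_12 := hg.mul_mul_of_lt (β := a12) (γ := a1) (by decide)
  by_cases h2 : a2 ∈ s <;> by_cases h12 : a12 ∈ s <;> by_cases h1 : a1 ∈ s <;> cases γ <;>
    simp only [orderedMonomial, rootList, List.filter, Finset.mem_insert, h2, h12, h1, reduceCtorEq,
      or_true, or_false, decide_true, decide_false, List.map, List.prod_cons, List.prod_nil,
      hg.mul_mul_self_eq_zero hr, h12_2, h1_2, h1_12, mul_smul_comm, smul_smul, mul_zero,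
      smul_zero] <;>
    first
      | exact ⟨0, (zero_smul _ _).symm⟩
      | exact ⟨1, (one_smul _ _).symm⟩
      | exact ⟨_, rfl⟩

lemma IsQCommuting.mul_mem_span (hg : IsQCommuting r g) (hr : 1 + r ^ 2 ≠ 0) {x y : A}
    (hx : x ∈ Algebra.adjoin ℂ (Set.range g))
    (hy : y ∈ Submodule.span ℂ (Set.range (orderedMonomial g))) :
    x * y ∈ Submodule.span ℂ (Set.range (orderedMonomial g)) := by
  induction hx using Algebra.adjoin_induction generalizing y with
  | mem x hx =>
    obtain ⟨γ, rfl⟩ := hx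
    induction hy using Submodule.span_induction with
    | mem y hy =>
      obtain ⟨s, rfl⟩ := hy
      obtain ⟨c, hc⟩ := hg.exists_mul_orderedMonomial hr γ s
      exact hc ▸ Submodule.smul_mem _ c (Submodule.subset_span ⟨_, rfl⟩)
    | zero => simp
    | add y z _ _ hy hz => simpa [mul_add] using add_mem hy hz
    | smul c y _ hy => simpa [mul_smul_comm] using Submodule.smul_mem _ c hy
  | algebraMap c => simpa [← Algebra.smul_def] using Submodule.smul_mem _ c hy
  | add x z _ _ hx hz => simpa [add_mul] using add_mem (hx hy) (hz hy)
  | mul x z _ _ hx hz => simpa [mul_assoc] using hx (hz hy)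

theorem IsQCommuting.toSubmodule_adjoin_eq_span (hg : IsQCommuting r g) (hr : 1 + r ^ 2 ≠ 0) :
    Subalgebra.toSubmodule (Algebra.adjoin ℂ (Set.range g))
      = Submodule.span ℂ (Set.range (orderedMonomial g)) := by
  have hone : (1 : A) ∈ Submodule.span ℂ (Set.range (orderedMonomial g)) :=
    Submodule.subset_span ⟨∅, by simp [orderedMonomial, rootList]⟩
  refine le_antisymm (fun x hx => by simpa using hg.mul_mem_span hr hx hone) ?_
  rw [Submodule.span_le]
  rintro _ ⟨s, rfl⟩
  refine Subalgebra.list_prod_mem _ fun x hx => ?_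
  obtain ⟨γ, -, rfl⟩ := List.mem_map.1 hx
  exact Algebra.subset_adjoin ⟨γ, rfl⟩

end Span

section Wedge

/-- The sign and power of `r` picked up when `γ` is moved past the smaller roots of `s`. -/
def wedgeCoeff (r : ℂ) (γ : PosRoot) (s : Finset PosRoot) : ℂ :=
  ∏ δ ∈ s with pos δ < pos γ, -r ^ ip δ γ

def wedge (r : ℂ) (γ : PosRoot) : Module.End ℂ (Finset PosRoot → ℂ) :=
  LinearMap.pi fun s => if γ ∈ s then wedgeCoeff r γ s • LinearMap.proj (s.erase γ) else 0

lemma wedge_apply (r : ℂ) (γ : PosRoot) (v : Finset PosRoot → ℂ) (s : Finset PosRoot) :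
    wedge r γ v s = if γ ∈ s then wedgeCoeff r γ s * v (s.erase γ) else 0 := by
  simp only [wedge, LinearMap.pi_apply]
  split_ifs <;> simp

lemma wedgeCoeff_erase_of_not_lt (r : ℂ) {β γ : PosRoot} (h : ¬ pos γ < pos β)
    (s : Finset PosRoot) : wedgeCoeff r β (s.erase γ) = wedgeCoeff r β s := by
  rw [wedgeCoeff, wedgeCoeff, Finset.filter_erase, Finset.erase_eq_of_notMem]
  simp [h]

lemma wedgeCoeff_of_lt_of_mem (r : ℂ) {β γ : PosRoot} (h : pos β < pos γ) {s : Finset PosRoot}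
    (hβ : β ∈ s) : wedgeCoeff r γ s = -r ^ ip β γ * wedgeCoeff r γ (s.erase β) := by
  rw [wedgeCoeff, wedgeCoeff, Finset.filter_erase,
    Finset.mul_prod_erase _ (fun δ => -r ^ ip δ γ) (Finset.mem_filter.2 ⟨hβ, h⟩)]

lemma wedge_mul_wedge_self (r : ℂ) (γ : PosRoot) : wedge r γ * wedge r γ = 0 := by
  refine LinearMap.ext fun v => funext fun s => ?_
  simp [wedge_apply]

lemma wedge_mul_wedge_of_lt (r : ℂ) {β γ : PosRoot} (h : pos β < pos γ) :
    wedge r γ * wedge r β = -(r ^ ip β γ) • (wedge r β * wedge r γ) := by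
  have hne : β ≠ γ := fun h' => (h' ▸ h).false
  refine LinearMap.ext fun v => funext fun s => ?_
  simp only [Module.End.mul_apply, LinearMap.smul_apply, Pi.smul_apply, smul_eq_mul, wedge_apply,
    Finset.mem_erase, hne, hne.symm, ne_eq, not_false_eq_true, true_and,
    wedgeCoeff_erase_of_not_lt r (lt_asymm h), Finset.erase_right_comm (a := β)]
  by_cases hβ : β ∈ s
  · by_cases hγ : γ ∈ s
    · simp only [hβ, hγ, if_true, wedgeCoeff_of_lt_of_mem r h hβ]
      ring
    · simp [hγ]
  · simp [hβ]

lemma isQCommuting_wedge (r : ℂ) : IsQCommuting r (wedge r) := by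
  intro β γ h
  rcases h.lt_or_eq with h | h
  · exact wedge_mul_wedge_of_lt r h
  · obtain rfl := pos_injective h
    simp [wedge_mul_wedge_self]

lemma wedge_single_of_forall_lt (r : ℂ) {γ : PosRoot} {t : Finset PosRoot}
    (ht : ∀ δ ∈ t, pos γ < pos δ) :
    wedge r γ (Pi.single t 1) = Pi.single (insert γ t) 1 := by
  have hγt : γ ∉ t := fun hγ => (ht γ hγ).false
  refine funext fun s => ?_
  rw [wedge_apply]
  by_cases hγs : γ ∈ s
  · have hs : s.erase γ = t ↔ s = insert γ t :=
      ⟨fun h => by rw [← h, Finset.insert_erase hγs], fun h => by rw [h, Finset.erase_insert hγt]⟩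
    by_cases hst : s = insert γ t
    · subst hst
      have hcoeff : wedgeCoeff r γ (insert γ t) = 1 := by
        refine Finset.prod_eq_one fun δ hδ => ?_
        simp only [Finset.mem_filter, Finset.mem_insert] at hδ
        rcases hδ with ⟨rfl | hδ, hlt⟩
        · exact absurd hlt (lt_irrefl _)
        · exact absurd hlt (lt_asymm (ht δ hδ))
      simp [hcoeff, Finset.erase_insert hγt]
    · simp [hγs, hst, hs]
  · have hst : s ≠ insert γ t := by rintro rfl; exact hγs (Finset.mem_insert_self γ t)
    simp [hγs, hst]

lemma list_prod_wedge_single_empty (r : ℂ) {l : List PosRoot}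
    (hl : l.Pairwise fun β γ => pos β < pos γ) :
    (l.map (wedge r)).prod (Pi.single ∅ 1) = Pi.single l.toFinset 1 := by
  induction l with
  | nil => rfl
  | cons γ l ih =>
    rw [List.pairwise_cons] at hl
    rw [List.map_cons, List.prod_cons, Module.End.mul_apply, ih hl.2, List.toFinset_cons,
      wedge_single_of_forall_lt r fun δ hδ => hl.1 δ (List.mem_toFinset.1 hδ)]

lemma orderedMonomial_wedge_single_empty (r : ℂ) (s : Finset PosRoot) :
    orderedMonomial (wedge r) s (Pi.single ∅ 1) = Pi.single s 1 := by
  have hsorted : rootList.Pairwise fun β γ => pos β < pos γ := by decide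
  rw [orderedMonomial, list_prod_wedge_single_empty r (hsorted.filter _)]
  congr
  ext γ
  cases γ <;> simp [rootList]

end Wedge

lemma linearIndependent_orderedMonomial_of_algHom {A : Type*} [Ring A] [Algebra ℂ A]
    {g : PosRoot → A} {r : ℂ} (φ : A →ₐ[ℂ] Module.End ℂ (Finset PosRoot → ℂ))
    (hφ : ∀ γ, φ (g γ) = wedge r γ) : LinearIndependent ℂ (orderedMonomial g) := by
  refine LinearIndependent.of_comp (LinearMap.applyₗ (Pi.single ∅ 1) ∘ₗ φ.toLinearMap) ?_
  have hφg : φ ∘ g = wedge r := funext hφ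
  convert (Pi.basisFun ℂ (Finset PosRoot)).linearIndependent using 1
  funext s
  simp [map_orderedMonomial, hφg, orderedMonomial_wedge_single_empty]

theorem IsQCommuting.orderedMonomial_basis_of_algHom {A : Type*} [Ring A] [Algebra ℂ A]
    {r r' : ℂ} {g : PosRoot → A} (hg : IsQCommuting r g) (hr : 1 + r ^ 2 ≠ 0)
    (φ : A →ₐ[ℂ] Module.End ℂ (Finset PosRoot → ℂ)) (hφ : ∀ γ, φ (g γ) = wedge r' γ) :
    LinearIndependent ℂ (orderedMonomial g)
      ∧ Subalgebra.toSubmodule (Algebra.adjoin ℂ (Set.range g))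
        = Submodule.span ℂ (Set.range (orderedMonomial g))
      ∧ Module.finrank ℂ (Algebra.adjoin ℂ (Set.range g)) = 8 := by
  have hli := linearIndependent_orderedMonomial_of_algHom φ hφ
  have hspan := hg.toSubmodule_adjoin_eq_span hr
  refine ⟨hli, hspan, ?_⟩
  rw [← Subalgebra.finrank_toSubmodule, hspan, finrank_span_eq_card hli]
  rfl

lemma isQCommuting_gen_e (q : ℝ) : IsQCommuting (q : ℂ) fun γ => gen q (e γ) := fun β γ h => by
  have hrel := RingQuot.mkAlgHom_rel ℂ (lrel.ee (q := q) β γ h)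
  rwa [map_mul, map_smul, map_mul] at hrel

lemma isQCommuting_gen_f (q : ℝ) : IsQCommuting (q : ℂ)⁻¹ fun γ => gen q (f γ) := fun β γ h => by
  have hrel := RingQuot.mkAlgHom_rel ℂ (lrel.ff (q := q) β γ h)
  rwa [map_mul, map_smul, map_mul, ← inv_zpow'] at hrel

def wedgeRepE (q : ℝ) : Lam q →ₐ[ℂ] Module.End ℂ (Finset PosRoot → ℂ) :=
  RingQuot.liftAlgHom ℂ ⟨FreeAlgebra.lift ℂ fun | e γ => wedge q γ | f _ => 0, by
    intro a b h
    cases h with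
    | ee β γ h => simpa [ce] using isQCommuting_wedge _ β γ h
    | _ => simp [ce]⟩

def wedgeRepF (q : ℝ) : Lam q →ₐ[ℂ] Module.End ℂ (Finset PosRoot → ℂ) :=
  RingQuot.liftAlgHom ℂ ⟨FreeAlgebra.lift ℂ fun | e _ => 0 | f γ => wedge (q : ℂ)⁻¹ γ, by
    intro a b h
    cases h with
    | ff β γ h => simpa [ce, inv_zpow'] using isQCommuting_wedge (q : ℂ)⁻¹ β γ h
    | _ => simp [ce]⟩

lemma wedgeRepE_gen_e (q : ℝ) (γ : PosRoot) : wedgeRepE q (gen q (e γ)) = wedge q γ := by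
  simp [wedgeRepE, gen, ce]

lemma wedgeRepF_gen_f (q : ℝ) (γ : PosRoot) : wedgeRepF q (gen q (f γ)) = wedge (q : ℂ)⁻¹ γ := by
  simp [wedgeRepF, gen, ce]

lemma one_add_ofReal_sq_ne_zero (x : ℝ) : (1 : ℂ) + (x : ℂ) ^ 2 ≠ 0 := by
  exact_mod_cast (by positivity : (0 : ℝ) < 1 + x ^ 2).ne'

theorem holomorphic_subalgebras_classical_dimension_general (q : ℝ) :
    (LinearIndependent ℂ (emon q)
      ∧ Subalgebra.toSubmodule (LamE q) = Submodule.span ℂ (Set.range (emon q))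
      ∧ Module.finrank ℂ (LamE q) = 8)
    ∧ (LinearIndependent ℂ (fmon q)
      ∧ Subalgebra.toSubmodule (LamF q) = Submodule.span ℂ (Set.range (fmon q))
      ∧ Module.finrank ℂ (LamF q) = 8) :=
  ⟨(isQCommuting_gen_e q).orderedMonomial_basis_of_algHom (one_add_ofReal_sq_ne_zero q)
      (wedgeRepE q) (wedgeRepE_gen_e q),
    (isQCommuting_gen_f q).orderedMonomial_basis_of_algHom
      (by simpa using one_add_ofReal_sq_ne_zero q⁻¹) (wedgeRepF q) (wedgeRepF_gen_f q)⟩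

theorem holomorphic_subalgebras_classical_dimension (q : ℝ) (hq0 : 0 < q) (hq1 : q < 1) :
    (LinearIndependent ℂ (emon q)
      ∧ Subalgebra.toSubmodule (LamE q) = Submodule.span ℂ (Set.range (emon q))
      ∧ Module.finrank ℂ (LamE q) = 8)
    ∧ (LinearIndependent ℂ (fmon q)
      ∧ Subalgebra.toSubmodule (LamF q) = Submodule.span ℂ (Set.range (fmon q))
      ∧ Module.finrank ℂ (LamF q) = 8) :=
  holomorphic_subalgebras_classical_dimension_general q

end QFlagExt
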